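/- Let k be even, k ≥ 2, and let Q^k(t) = Im((t+i)^k). Then Q^k(t)/t is a polynomial in t^2, Q^k has 0 as a root, and it has exactly (k-2)/2 positive real roots and (k-2)/2 negative real roots. -/

import Mathlib

/-!
For `t = cot θ` one has `t + i = e^{iθ} / sin θ`, so `Q^k(cot θ) = sin (kθ) / sin^k θ`.
Hence the `k - 1` distinct numbers `cot (mπ/k)`, `0 < m < k`, are roots of `Q^k`, which has
degree `k - 1`, so they are all of its roots. Since `cot` decreases on `(0, π)` and vanishes
at `π/2`, the root `cot (mπ/k)` is positive for `2m < k` and negative for `2m > k`. For even `k`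
the top term of the defining sum vanishes, leaving only odd powers of `t`.
-/

open Polynomial

/-- The real polynomial `Q^k(t) = ∑_{h=0}^{⌊k/2⌋} (-1)^h C(k, 2h+1) t^{k-1-2h}`. -/
noncomputable def QR (k : ℕ) : Polynomial ℝ :=
  ∑ h ∈ Finset.range (k / 2 + 1),
    Polynomial.C ((-1 : ℝ) ^ h * (k.choose (2 * h + 1) : ℝ)) * Polynomial.X ^ (k - 1 - 2 * h)

open Real Finset

theorem Finset.sum_range_two_mul {M : Type*} [AddCommMonoid M] (f : ℕ → M) (n : ℕ) :
    ∑ i ∈ range (2 * n), f i = ∑ i ∈ range n, (f (2 * i) + f (2 * i + 1)) := by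
  induction n with
  | zero => simp
  | succ n ih => rw [Nat.mul_succ, sum_range_succ, sum_range_succ, sum_range_succ, ih, add_assoc]

theorem Complex.im_I_pow_two_mul (n : ℕ) : (Complex.I ^ (2 * n)).im = 0 := by
  rw [pow_mul, Complex.I_sq, ← Complex.ofReal_one, ← Complex.ofReal_neg, ← Complex.ofReal_pow,
    Complex.ofReal_im]

theorem Complex.im_I_pow_two_mul_add_one (n : ℕ) : (Complex.I ^ (2 * n + 1)).im = (-1) ^ n := by
  rw [pow_succ, pow_mul, Complex.I_sq, ← Complex.ofReal_one, ← Complex.ofReal_neg,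
    ← Complex.ofReal_pow, Complex.im_ofReal_mul, Complex.I_im, mul_one]

theorem QR_eval (k : ℕ) (t : ℝ) : (QR k).eval t = (((t : ℂ) + Complex.I) ^ k).im := by
  have hterm (m : ℕ) : (Complex.I ^ m * (t : ℂ) ^ (k - m) * k.choose m).im
      = t ^ (k - m) * k.choose m * (Complex.I ^ m).im := by
    rw [mul_assoc, mul_comm, ← Complex.ofReal_natCast, ← Complex.ofReal_pow,
      ← Complex.ofReal_mul, Complex.im_ofReal_mul]
  -- padding the binomial sum to even length lets its terms pair up as (even, odd)
  have hrange : range (k + 1) ⊆ range (2 * (k / 2 + 1)) := range_subset_range.2 (by omega)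
  rw [add_comm, add_pow, Complex.im_sum]
  simp_rw [hterm]
  rw [sum_subset hrange fun m _ hm => by
    rw [Nat.choose_eq_zero_of_lt (by simpa using hm), Nat.cast_zero, mul_zero, zero_mul]]
  simp only [sum_range_two_mul, Complex.im_I_pow_two_mul, Complex.im_I_pow_two_mul_add_one,
    mul_zero, zero_add, QR, eval_finsetSum, eval_mul, eval_C, eval_pow, eval_X]
  refine sum_congr rfl fun h _ => ?_
  rw [Nat.sub_sub, add_comm 1]
  ring

theorem Complex.ofReal_cot_add_I {θ : ℝ} (h : Real.sin θ ≠ 0) :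
    (Real.cot θ : ℂ) + I = exp (θ * I) / Real.sin θ := by
  have h' : (Real.sin θ : ℂ) ≠ 0 := ofReal_ne_zero.2 h
  rw [exp_mul_I, ← ofReal_cos, ← ofReal_sin, Real.cot_eq_cos_div_sin, ofReal_div]
  field_simp

theorem QR_eval_cot (k : ℕ) {θ : ℝ} (h : sin θ ≠ 0) :
    (QR k).eval (cot θ) = sin (k * θ) / sin θ ^ k := by
  rw [QR_eval, Complex.ofReal_cot_add_I h, div_pow, ← Complex.exp_nat_mul, ← Complex.ofReal_pow,
    Complex.div_ofReal_im, ← mul_assoc, ← Complex.ofReal_natCast, ← Complex.ofReal_mul,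
    Complex.exp_ofReal_mul_I_im]

theorem mul_pi_div_mem_Ioo {k m : ℕ} (hm : 0 < m) (hmk : m < k) :
    (m : ℝ) * π / k ∈ Set.Ioo 0 π := by
  have hk : (0 : ℝ) < k := by exact_mod_cast hm.trans hmk
  refine ⟨by positivity, (div_lt_iff₀ hk).2 ?_⟩
  rw [mul_comm π]
  exact mul_lt_mul_of_pos_right (by exact_mod_cast hmk) pi_pos

theorem QR_isRoot_cot {k m : ℕ} (hm : 0 < m) (hmk : m < k) :
    (QR k).IsRoot (cot (m * π / k)) := by
  have hθ := mul_pi_div_mem_Ioo hm hmk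
  have hk : (k : ℝ) ≠ 0 := by exact_mod_cast (hm.trans hmk).ne'
  rw [IsRoot, QR_eval_cot k (sin_pos_of_pos_of_lt_pi hθ.1 hθ.2).ne', mul_div_cancel₀ _ hk,
    sin_nat_mul_pi, zero_div]

theorem QR_coeff_sub_one (k : ℕ) : (QR k).coeff (k - 1) = k := by
  rw [QR, finsetSum_coeff, sum_eq_single 0]
  · simp
  · intro h hh h0
    rw [mem_range] at hh
    rw [coeff_C_mul, coeff_X_pow, if_neg (by omega), mul_zero]
  · simp

theorem QR_ne_zero {k : ℕ} (hk : k ≠ 0) : QR k ≠ 0 := fun h => by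
  simpa [h, eq_comm, hk] using QR_coeff_sub_one k

theorem QR_natDegree_le (k : ℕ) : (QR k).natDegree ≤ k - 1 :=
  natDegree_sum_le_of_forall_le _ _ fun _ _ =>
    (natDegree_C_mul_le _ _).trans <| (natDegree_X_pow_le _).trans (Nat.sub_le _ _)

theorem Real.cot_sub_cot {a b : ℝ} (ha : sin a ≠ 0) (hb : sin b ≠ 0) :
    cot a - cot b = sin (b - a) / (sin a * sin b) := by
  rw [cot_eq_cos_div_sin, cot_eq_cos_div_sin, sin_sub]
  field_simp

theorem Real.strictAntiOn_cot : StrictAntiOn cot (Set.Ioo 0 π) := by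
  intro a ha b hb hab
  have hsa := sin_pos_of_pos_of_lt_pi ha.1 ha.2
  have hsb := sin_pos_of_pos_of_lt_pi hb.1 hb.2
  rw [← sub_pos, cot_sub_cot hsa.ne' hsb.ne']
  exact div_pos (sin_pos_of_pos_of_lt_pi (by linarith) (by linarith [ha.1, hb.2])) (by positivity)

theorem Real.cot_pi_div_two : cot (π / 2) = 0 := by
  rw [cot_eq_cos_div_sin, cos_pi_div_two, zero_div]

theorem injOn_cot_mul_pi_div (k : ℕ) :
    Set.InjOn (fun m : ℕ => cot (m * π / k)) (Ico 1 k) := by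
  refine strictAntiOn_cot.injOn.comp (fun a ha b _ hab => ?_) fun m hm => ?_
  · have hk : (k : ℝ) ≠ 0 := by
      rw [coe_Ico, Set.mem_Ico] at ha
      exact_mod_cast (ha.1.trans_lt ha.2).ne_bot
    simpa [hk, pi_ne_zero] using hab
  · rw [coe_Ico, Set.mem_Ico] at hm
    exact mul_pi_div_mem_Ioo hm.1 hm.2

theorem QR_roots (k : ℕ) :
    (QR k).roots = ((Ico 1 k).image fun m : ℕ => cot (m * π / k)).val := by
  have hle : ((Ico 1 k).image fun m : ℕ => cot (m * π / k)).val ≤ (QR k).roots := by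
    refine val_le_iff_val_subset.2 fun x hx => ?_
    obtain ⟨m, hm, rfl⟩ := mem_image.1 (mem_val.mp hx)
    rw [mem_Ico] at hm
    exact (mem_roots (QR_ne_zero (by omega))).2 (QR_isRoot_cot hm.1 hm.2)
  refine (Multiset.eq_of_le_of_card_le hle ?_).symm
  calc Multiset.card (QR k).roots ≤ k - 1 := (card_roots' _).trans (QR_natDegree_le k)
    _ = _ := by rw [card_val, card_image_of_injOn (injOn_cot_mul_pi_div k), Nat.card_Ico]

theorem card_filter_roots_QR (k : ℕ) (p : ℝ → Prop) [DecidablePred p] :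
    Multiset.card ((QR k).roots.filter p) =
      #((Ico 1 k).filter fun m : ℕ => p (cot (m * π / k))) := by
  rw [QR_roots, ← filter_val, card_val, filter_image,
    card_image_of_injOn ((injOn_cot_mul_pi_div k).mono (filter_subset _ _))]

theorem cot_mul_pi_div_pos_iff {k m : ℕ} (hm : 0 < m) (hmk : m < k) :
    0 < cot (m * π / k) ↔ 2 * m < k := by
  have hk : (0 : ℝ) < k := by exact_mod_cast hm.trans hmk
  rw [← cot_pi_div_two, strictAntiOn_cot.lt_iff_gt ⟨by positivity, by linarith [pi_pos]⟩
    (mul_pi_div_mem_Ioo hm hmk), div_lt_div_iff₀ hk two_pos, mul_right_comm,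
    mul_comm π, mul_lt_mul_iff_of_pos_right pi_pos]
  norm_cast
  omega

theorem cot_mul_pi_div_neg_iff {k m : ℕ} (hm : 0 < m) (hmk : m < k) :
    cot (m * π / k) < 0 ↔ k < 2 * m := by
  have hk : (0 : ℝ) < k := by exact_mod_cast hm.trans hmk
  rw [← cot_pi_div_two, strictAntiOn_cot.lt_iff_gt (mul_pi_div_mem_Ioo hm hmk)
    ⟨by positivity, by linarith [pi_pos]⟩, div_lt_div_iff₀ two_pos hk, mul_right_comm,
    mul_comm π, mul_lt_mul_iff_of_pos_right pi_pos]
  norm_cast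
  omega

theorem filter_Ico_cot_pos (k : ℕ) :
    (Ico 1 k).filter (fun m : ℕ => 0 < cot (m * π / k)) = Ico 1 ((k + 1) / 2) := by
  ext m
  simp only [mem_filter, mem_Ico]
  constructor
  · rintro ⟨hm, h⟩
    have := (cot_mul_pi_div_pos_iff hm.1 hm.2).1 h
    omega
  · rintro hm
    exact ⟨⟨hm.1, by omega⟩, (cot_mul_pi_div_pos_iff hm.1 (by omega)).2 (by omega)⟩

theorem filter_Ico_cot_neg (k : ℕ) :
    (Ico 1 k).filter (fun m : ℕ => cot (m * π / k) < 0) = Ico (k / 2 + 1) k := by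
  ext m
  simp only [mem_filter, mem_Ico]
  constructor
  · rintro ⟨hm, h⟩
    have := (cot_mul_pi_div_neg_iff hm.1 hm.2).1 h
    omega
  · rintro hm
    exact ⟨⟨by omega, hm.2⟩, (cot_mul_pi_div_neg_iff (by omega) hm.2).2 (by omega)⟩

theorem QR_two_mul (n : ℕ) :
    QR (2 * n) = X * (∑ h ∈ range n,
      C ((-1 : ℝ) ^ h * ((2 * n).choose (2 * h + 1) : ℝ)) * X ^ (n - 1 - h)).comp (X ^ 2) := by
  rw [QR, Nat.mul_div_cancel_left n two_pos, sum_range_succ,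
    Nat.choose_eq_zero_of_lt (by omega : 2 * n < 2 * n + 1), Nat.cast_zero, mul_zero, map_zero,
    zero_mul, add_zero, Polynomial.sum_comp, mul_sum]
  refine sum_congr rfl fun h hh => ?_
  rw [mem_range] at hh
  rw [mul_comp, C_comp, pow_comp, X_comp, ← pow_mul,
    show 2 * n - 1 - 2 * h = (n - 1 - h) * 2 + 1 by omega, pow_succ]
  ring

theorem QR_even_odd_function_and_root_count_general (k : ℕ) (hk : Even k) :
    (∃ R : Polynomial ℝ, QR k = Polynomial.X * R.comp (Polynomial.X ^ 2)) ∧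
      (QR k).IsRoot 0 ∧
      ((QR k).roots.filter (fun x => 0 < x)).card = (k - 2) / 2 ∧
      ((QR k).roots.filter (fun x => x < 0)).card = (k - 2) / 2 := by
  obtain ⟨n, rfl⟩ := hk
  have hodd : QR (n + n) = X * _ := (two_mul n).symm ▸ QR_two_mul n
  refine ⟨⟨_, hodd⟩, by simp [hodd], ?_, ?_⟩
  · rw [card_filter_roots_QR, filter_Ico_cot_pos, Nat.card_Ico]
    omega
  · rw [card_filter_roots_QR, filter_Ico_cot_neg, Nat.card_Ico]
    omega

theorem QR_even_odd_function_and_root_count (k : ℕ) (hk : Even k) (hk2 : 2 ≤ k) :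
    (∃ R : Polynomial ℝ, QR k = Polynomial.X * R.comp (Polynomial.X ^ 2)) ∧
      (QR k).IsRoot 0 ∧
      ((QR k).roots.filter (fun x => 0 < x)).card = (k - 2) / 2 ∧
      ((QR k).roots.filter (fun x => x < 0)).card = (k - 2) / 2 :=
  QR_even_odd_function_and_root_count_general k hk
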